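/- Fix ξ ∈ [1,2) and let μ be a Borel probability measure on ℝ with μ([0,1]) = 1 and 0 < μ([0,t]) < 1 for every t ∈ (0,1). Define the posterior cdf F_ι(w|z) := (∫_{[0,w]} f_ι(z,x) dμ(x)) / (∫_{[0,1]} f_ι(z,x) dμ(x)). Then there exists ι* ∈ (0, (2−ξ)/(1+ξ)) such that for every ι ∈ (0, ι*] and every w ∈ (0,1): F_ι(w|1) < F_ι(w|1+ξ). That is, with the continuous-support noise density f_ι, the posterior given the lower signal 1 strictly first-order stochastically dominates the posterior given the higher signal 1+ξ. -/

import Mathlib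

open MeasureTheory Set

/-- The normalizing constant `h = (2 + ι + ι² − ξ)/(2 + ξ + ι)`. -/
noncomputable def hconst (ι ξ : ℝ) : ℝ := (2 + ι + ι ^ 2 - ξ) / (2 + ξ + ι)

/-- The continuous-support signal density `f_ι(z,x)`: a trapezoid of width `ξ`,
a near-rectangle of width `1`, and a triangle of width `ι`. -/
noncomputable def fIota (ι ξ z x : ℝ) : ℝ :=
  if x ≤ z ∧ z < x + ξ then 1 - (z - x) * (1 - hconst ι ξ) / ξ
  else if x + ξ ≤ z ∧ z < x + ξ + 1 then hconst ι ξ - (z - x - ξ) * ι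
  else if x + ξ + 1 ≤ z ∧ z ≤ x + ξ + 1 + ι then
    hconst ι ξ - ι - (z - x - ξ - 1) * (hconst ι ξ - ι) / ι
  else 0

/-- The posterior cdf of `X` given the signal realization `Z = z`, for the
noise density `f_ι`. -/
noncomputable def postIota (μ : Measure ℝ) (ι ξ w z : ℝ) : ℝ :=
  (∫ x in Icc (0 : ℝ) w, fIota ι ξ z x ∂μ) / (∫ x in Icc (0 : ℝ) 1, fIota ι ξ z x ∂μ)

/-!
On the support `[0,1]` of the prior both likelihoods are affine in the state `x`:
`f_ι(1,x) = 1 - (1-h)/ξ + ((1-h)/ξ) x` and `f_ι(1+ξ,x) = h - ι + ι x`.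
For affine likelihoods `aᵢ + bᵢ x` the posterior cdfs compare through the sign of
`a₂ b₁ - a₁ b₂` (the sign of the slope of the likelihood ratio), which here is the sign of
`h(1-h) - ιξ`. As `ι → 0`, `h → (2-ξ)/(2+ξ) ∈ (0,1)`, so this is positive for small `ι`.
-/

theorem mul_measureReal_lt_setIntegral {X : Type*} [MeasurableSpace X] {μ : Measure X}
    {s : Set X} {f : X → ℝ} {c : ℝ} (hs : MeasurableSet s)
    (hμs₀ : μ s ≠ 0) (hμs : μ s ≠ ⊤) (hf : ∀ x ∈ s, c < f x) (hfint : IntegrableOn f s μ) :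
    c * μ.real s < ∫ x in s, f x ∂μ := by
  have hc : IntegrableOn (fun _ => c) s μ := integrableOn_const hμs
  have hpos : 0 < ∫ x in s, (f x - c) ∂μ := by
    rw [setIntegral_pos_iff_support_of_nonneg_ae (f := fun x => f x - c) _ (hfint.sub hc)]
    · have hsupp : s ⊆ Function.support fun x => f x - c := fun x hx =>
        Function.mem_support.2 (sub_ne_zero.2 (hf x hx).ne')
      rw [inter_eq_self_of_subset_right hsupp]
      exact pos_iff_ne_zero.2 hμs₀
    · filter_upwards [ae_restrict_mem hs] with x hx using sub_nonneg.2 (hf x hx).le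
  rw [integral_sub hfint hc, setIntegral_const, smul_eq_mul] at hpos
  linarith

theorem setIntegral_add_mul_id (μ : Measure ℝ) {s : Set ℝ} (hμs : μ s ≠ ⊤)
    (hs : IntegrableOn (fun x => x) s μ) (a b : ℝ) :
    ∫ x in s, (a + b * x) ∂μ = a * μ.real s + b * ∫ x in s, x ∂μ := by
  rw [integral_add (f := fun _ => a) (integrableOn_const hμs) (hs.const_mul b),
    setIntegral_const, smul_eq_mul, mul_comm, integral_const_mul]

theorem div_add_lt_div_add {x y u v : ℝ} (hxy : 0 < x + y) (huv : 0 < u + v)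
    (h : x * v < u * y) : x / (x + y) < u / (u + v) := by
  rw [div_lt_div_iff₀ hxy huv]
  linarith

noncomputable def posteriorCdf (μ : Measure ℝ) (g : ℝ → ℝ) (w : ℝ) : ℝ :=
  (∫ x in Icc (0 : ℝ) w, g x ∂μ) / ∫ x in Icc (0 : ℝ) 1, g x ∂μ

theorem posteriorCdf_congr (μ : Measure ℝ) {g₁ g₂ : ℝ → ℝ} (hg : EqOn g₁ g₂ (Icc 0 1))
    {w : ℝ} (hw : w ≤ 1) : posteriorCdf μ g₁ w = posteriorCdf μ g₂ w := by
  rw [posteriorCdf, posteriorCdf, setIntegral_congr_fun measurableSet_Icc hg,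
    setIntegral_congr_fun measurableSet_Icc (hg.mono (Icc_subset_Icc_right hw))]

theorem posteriorCdf_affine_lt (μ : Measure ℝ) [IsFiniteMeasure μ] {w : ℝ} (hw : w ≤ 1)
    (hS : μ (Icc 0 w) ≠ 0) (hR : μ (Ioc w 1) ≠ 0) {a₁ b₁ a₂ b₂ : ℝ}
    (ha₁ : 0 < a₁) (hb₁ : 0 ≤ b₁) (ha₂ : 0 < a₂) (hb₂ : 0 ≤ b₂) (hab : a₁ * b₂ < a₂ * b₁) :
    posteriorCdf μ (fun x => a₁ + b₁ * x) w < posteriorCdf μ (fun x => a₂ + b₂ * x) w := by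
  have hw0 : 0 ≤ w := nonempty_Icc.1 (nonempty_of_measure_ne_zero hS)
  have hidS : IntegrableOn (fun x : ℝ => x) (Icc 0 w) μ := continuous_id.integrableOn_Icc
  have hidR : IntegrableOn (fun x : ℝ => x) (Ioc w 1) μ := continuous_id.integrableOn_Ioc
  have hsplit : ∀ a b : ℝ, ∫ x in Icc 0 1, (a + b * x) ∂μ
      = ∫ x in Icc 0 w, (a + b * x) ∂μ + ∫ x in Ioc w 1, (a + b * x) ∂μ := fun a b => by
    have hg : Continuous fun x : ℝ => a + b * x := by fun_prop
    rw [← Icc_union_Ioc_eq_Icc hw0 hw, setIntegral_union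
      ((Iic_disjoint_Ioc le_rfl).mono_left Icc_subset_Iic_self) measurableSet_Ioc
      hg.integrableOn_Icc hg.integrableOn_Ioc]
  set P := μ.real (Icc 0 w)
  set Q := μ.real (Ioc w 1)
  set M := ∫ x in Icc 0 w, x ∂μ
  set N := ∫ x in Ioc w 1, x ∂μ
  have hP : 0 < P := ENNReal.toReal_pos hS (measure_ne_top μ _)
  have hQ : 0 < Q := ENNReal.toReal_pos hR (measure_ne_top μ _)
  have hM : 0 ≤ M := setIntegral_nonneg measurableSet_Icc fun x hx => hx.1
  have hN : 0 ≤ N := setIntegral_nonneg measurableSet_Ioc fun x hx => hw0.trans hx.1.le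
  have hMw : M ≤ w * P := by
    simpa [mul_comm] using setIntegral_mono_on hidS (integrableOn_const (measure_ne_top μ _))
      measurableSet_Icc fun x (hx : x ∈ Icc 0 w) => hx.2
  have hNw : w * Q < N :=
    mul_measureReal_lt_setIntegral measurableSet_Ioc hR (measure_ne_top μ _) (fun x hx => hx.1)
      hidR
  -- `(a₂P + b₂M)(a₁Q + b₁N) - (a₁P + b₁M)(a₂Q + b₂N)` factors as this product
  have hodds : (a₂ * b₁ - a₁ * b₂) * (P * N - Q * M) > 0 :=
    mul_pos (by linarith) (by nlinarith)
  unfold posteriorCdf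
  rw [hsplit, hsplit]
  simp only [setIntegral_add_mul_id μ (measure_ne_top μ _) hidS,
    setIntegral_add_mul_id μ (measure_ne_top μ _) hidR]
  exact div_add_lt_div_add (by positivity) (by positivity) (by linarith)

theorem fIota_one_eqOn {ι ξ : ℝ} (hξ : 1 ≤ ξ) :
    EqOn (fIota ι ξ 1) (fun x => 1 - (1 - hconst ι ξ) / ξ + (1 - hconst ι ξ) / ξ * x)
      (Icc 0 1) := by
  rintro x ⟨hx0, hx1⟩
  by_cases hx : 1 < x + ξ
  · rw [fIota, if_pos ⟨hx1, hx⟩]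
    ring
  · obtain rfl : x = 0 := by linarith
    obtain rfl : ξ = 1 := by linarith
    rw [fIota, if_neg (by norm_num), if_pos (by norm_num)]
    ring

theorem fIota_one_add_eqOn {ι ξ : ℝ} (hι : 0 ≤ ι) :
    EqOn (fIota ι ξ (1 + ξ)) (fun x => hconst ι ξ - ι + ι * x) (Icc 0 1) := by
  rintro x ⟨hx0, hx1⟩
  rw [fIota, if_neg (by intro h; linarith [h.2])]
  rcases hx0.lt_or_eq with hx | rfl
  · rw [if_pos ⟨by linarith, by linarith⟩]
    ring
  · rw [if_neg (by intro h; linarith [h.2]), if_pos ⟨by linarith, by linarith⟩]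
    ring

theorem mul_lt_hconst_mul_one_sub_hconst {ι ξ : ℝ} (hξ : ξ ∈ Ico 1 2) (hι : 0 < ι)
    (hιξ : ι ≤ (2 - ξ) / 50) : ι * ξ < hconst ι ξ * (1 - hconst ι ξ) := by
  obtain ⟨hξ1, hξ2⟩ := hξ
  have hι50 : 50 * ι ≤ 2 - ξ := by linarith [(le_div_iff₀ (by norm_num : (0 : ℝ) < 50)).1 hιξ]
  have hD5 : (2 + ξ + ι) ^ 2 < 25 := by nlinarith
  have hh : hconst ι ξ * (1 - hconst ι ξ)
      = (2 + ι + ι ^ 2 - ξ) * (2 * ξ - ι ^ 2) / (2 + ξ + ι) ^ 2 := by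
    rw [hconst]
    field_simp
    ring
  rw [hh, lt_div_iff₀ (by positivity)]
  calc ι * ξ * (2 + ξ + ι) ^ 2 < 50 * ι := by
        nlinarith [mul_pos hι (by linarith : 0 < 2 - ξ)]
    _ ≤ 2 - ξ := hι50
    _ ≤ (2 + ι + ι ^ 2 - ξ) * (2 * ξ - ι ^ 2) := by
      have hB : 1 ≤ 2 * ξ - ι ^ 2 := by nlinarith
      nlinarith [mul_nonneg (by positivity : 0 ≤ ι + ι ^ 2) (by linarith : 0 ≤ 2 * ξ - ι ^ 2)]

/-- Fix `ξ ∈ [1,2)` and a prior `μ` with support `[0,1]`. Then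
there exists `ι* ∈ (0, (2−ξ)/(1+ξ))` such that for every `ι ∈ (0, ι*]` and
every `w ∈ (0,1)`, `F_ι(w|1) < F_ι(w|1+ξ)`: the posterior given the lower
signal `1` strictly FOSDs the posterior given the higher signal `1+ξ`. -/
theorem stmt_7 (ξ : ℝ) (hξ : ξ ∈ Ico (1 : ℝ) 2)
    (μ : Measure ℝ) [IsProbabilityMeasure μ]
    (hμ : μ (Icc (0 : ℝ) 1) = 1)
    (hsupp : ∀ t ∈ Ioo (0 : ℝ) 1, 0 < μ (Icc 0 t) ∧ μ (Icc 0 t) < 1) :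
    ∃ ιs ∈ Ioo (0 : ℝ) ((2 - ξ) / (1 + ξ)),
      ∀ ι ∈ Ioc (0 : ℝ) ιs, ∀ w ∈ Ioo (0 : ℝ) 1,
        postIota μ ι ξ w 1 < postIota μ ι ξ w (1 + ξ) := by
  obtain ⟨hξ1, hξ2⟩ := hξ
  refine ⟨(2 - ξ) / 50, ⟨by linarith, div_lt_div_of_pos_left (by linarith) (by linarith)
    (by linarith)⟩, fun ι ⟨hι, hιs⟩ w hw => ?_⟩
  have hcore := mul_lt_hconst_mul_one_sub_hconst ⟨hξ1, hξ2⟩ hι hιs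
  set h := hconst ι ξ
  have hh0 : 0 < h := by nlinarith
  have hh1 : h < 1 := by nlinarith
  have hιh : ι < h := by nlinarith
  have hslope : (1 - h) / ξ ≤ 1 - h := div_le_self (by linarith) hξ1
  have hcross : (1 - (1 - h) / ξ) * ι < (h - ι) * ((1 - h) / ξ) := by
    have hξ0 : 0 < ξ := by linarith
    have : ξ * ((h - ι) * ((1 - h) / ξ) - (1 - (1 - h) / ξ) * ι)
        = h * (1 - h) - ι * ξ := by
      field_simp
      ring
    nlinarith
  have hR : μ (Ioc w 1) ≠ 0 := fun h0 => (hsupp w hw).2.not_ge <| by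
    simpa [← hμ, h0, Icc_union_Ioc_eq_Icc hw.1.le hw.2.le] using
      measure_union_le (μ := μ) (Icc 0 w) (Ioc w 1)
  change posteriorCdf μ (fIota ι ξ 1) w < posteriorCdf μ (fIota ι ξ (1 + ξ)) w
  rw [posteriorCdf_congr μ (fIota_one_eqOn hξ1) hw.2.le,
    posteriorCdf_congr μ (fIota_one_add_eqOn hι.le) hw.2.le]
  exact posteriorCdf_affine_lt μ hw.2.le (hsupp w hw).1.ne' hR (by linarith)
    (div_nonneg (by linarith) (by linarith)) (by linarith) hι.le hcross
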